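/- arXiv:2405.19541 — 4 statements merged into one kernel-verified Lean document; each statement's English description precedes it below -/
import Mathlib

section
/- For any Boolean function f : {0,1}^n → {0,1} that is non-decreasing, the expected number of pivotal coordinates equals E(S_n f), where S_n = X_1 + ⋯ + X_n with X_i(ω) = ω(i)/p − (1−ω(i))/(1−p). -/
open Finset Real

/-- The Bernoulli(p) product weight of a configuration `ω ∈ {0,1}^n`. -/
def W (n : ℕ) (p : ℝ) (ω : Fin n → Bool) : ℝ :=
  ∏ i, if ω i then p else 1 - p

/-- Expectation of `g` under the Bernoulli(p) product measure on `{0,1}^n`. -/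
def Ex (n : ℕ) (p : ℝ) (g : (Fin n → Bool) → ℝ) : ℝ :=
  ∑ ω : Fin n → Bool, g ω * W n p ω

/-- `ω` with its `i`-th coordinate set to `1`. -/
def up1 {n : ℕ} (ω : Fin n → Bool) (i : Fin n) : Fin n → Bool :=
  Function.update ω i true

/-- `ω` with its `i`-th coordinate set to `0`. -/
def up0 {n : ℕ} (ω : Fin n → Bool) (i : Fin n) : Fin n → Bool :=
  Function.update ω i false

/-- The random variable `X i (ω) = ω(i)/p − (1−ω(i))/(1−p)`. -/
noncomputable def X (n : ℕ) (p : ℝ) (i : Fin n) (ω : Fin n → Bool) : ℝ :=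
  (if ω i then (1:ℝ) else 0) / p - (1 - if ω i then (1:ℝ) else 0) / (1 - p)

/-- `S_n = X_1 + ⋯ + X_n`. -/
noncomputable def Sn (n : ℕ) (p : ℝ) (ω : Fin n → Bool) : ℝ :=
  ∑ i, X n p i ω

/-- The set of pivotal coordinates of `f` at `ω`. -/
def pivSet {n : ℕ} (f : (Fin n → Bool) → Bool) (ω : Fin n → Bool) : Finset (Fin n) :=
  Finset.univ.filter fun i => f (up1 ω i) ≠ f (up0 ω i)

/-- The real value of a Boolean function. -/
def fval {n : ℕ} (f : (Fin n → Bool) → Bool) (ω : Fin n → Bool) : ℝ :=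
  if f ω then 1 else 0

/-- Probability of an event under the Bernoulli(p) product measure. -/
def Pr (n : ℕ) (p : ℝ) (A : (Fin n → Bool) → Prop) [DecidablePred A] : ℝ :=
  ∑ ω ∈ Finset.univ.filter A, W n p ω

/-- `f` is non-decreasing. -/
def Mono {n : ℕ} (f : (Fin n → Bool) → Bool) : Prop :=
  ∀ (ω : Fin n → Bool) (i : Fin n), f (up0 ω i) ≤ f (up1 ω i)

/-! Conditioning on all coordinates but the `i`-th gives, for every real `g`,
`E[X_i g] = E[g(ω^i) − g(ω_i)]`: the weights `p` and `1 − p` of the two values of `ω(i)` cancel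
the factors `1/p` and `−1/(1−p)` in `X_i`. For non-decreasing `f` the difference
`f(ω^i) − f(ω_i)` is the indicator that `i` is pivotal, so summing over `i` gives the theorem. -/

section Coordinates

variable {n : ℕ} (ω : Fin n → Bool) (i : Fin n)

lemma up1_up1 : up1 (up1 ω i) i = up1 ω i := by simp [up1]

lemma up0_up1 : up0 (up1 ω i) i = up0 ω i := by simp [up0, up1]

lemma up1_up0 : up1 (up0 ω i) i = up1 ω i := by simp [up0, up1]

lemma up0_up0 : up0 (up0 ω i) i = up0 ω i := by simp [up0]

lemma X_up1 (p : ℝ) : X n p i (up1 ω i) = p⁻¹ := by simp [X, up1]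

lemma X_up0 (p : ℝ) : X n p i (up0 ω i) = -(1 - p)⁻¹ := by simp [X, up0]

lemma W_update (p : ℝ) (b : Bool) :
    W n p (Function.update ω i b) =
      (if b then p else 1 - p) * ∏ j ∈ univ.erase i, if ω j then p else 1 - p := by
  rw [W, ← Finset.mul_prod_erase univ _ (mem_univ i), Function.update_self]
  congr 1
  exact Finset.prod_congr rfl fun j hj => by rw [Function.update_of_ne (ne_of_mem_erase hj)]

lemma one_sub_mul_W_up1 (p : ℝ) : (1 - p) * W n p (up1 ω i) = p * W n p (up0 ω i) := by
  simp only [up1, up0, W_update, if_true, Bool.false_eq_true, if_false]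
  ring

end Coordinates

lemma sum_up1_add_up0 {n : ℕ} (i : Fin n) (F : (Fin n → Bool) → ℝ) :
    ∑ ω, (F (up1 ω i) + F (up0 ω i)) = 2 * ∑ ω, F ω := by
  set flipAt : (Fin n → Bool) → Fin n → Bool := fun ω => Function.update ω i (!ω i)
  have flipAt_involutive : Function.Involutive flipAt := fun ω => by simp [flipAt]
  have pair : ∀ ω, F (up1 ω i) + F (up0 ω i) = F ω + F (flipAt ω) := fun ω => by
    cases hω : ω i
    · rw [show up0 ω i = ω by rw [up0, ← hω, Function.update_eq_self]]
      simp [up1, flipAt, hω, add_comm]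
    · rw [show up1 ω i = ω by rw [up1, ← hω, Function.update_eq_self]]
      simp [up0, flipAt, hω]
  rw [Finset.sum_congr rfl fun ω _ => pair ω, Finset.sum_add_distrib, two_mul,
    Fintype.sum_equiv flipAt_involutive.toPerm (fun ω => F (flipAt ω)) F fun _ => rfl]

lemma Ex_sum {ι : Type*} (s : Finset ι) (n : ℕ) (p : ℝ) (g : ι → (Fin n → Bool) → ℝ) :
    Ex n p (fun ω => ∑ k ∈ s, g k ω) = ∑ k ∈ s, Ex n p (g k) := by
  simp only [Ex, Finset.sum_mul]
  exact Finset.sum_comm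

theorem Ex_X_mul (n : ℕ) (p : ℝ) (hp0 : p ≠ 0) (hp1 : p ≠ 1) (i : Fin n)
    (g : (Fin n → Bool) → ℝ) :
    Ex n p (fun ω => X n p i ω * g ω) = Ex n p (fun ω => g (up1 ω i) - g (up0 ω i)) := by
  set D : (Fin n → Bool) → ℝ := fun ω => (g (up1 ω i) - g (up0 ω i) - X n p i ω * g ω) * W n p ω
  have pair_cancel : ∀ ω, D (up1 ω i) + D (up0 ω i) = 0 := fun ω => by
    have hW := one_sub_mul_W_up1 ω i p
    simp only [D, up1_up1, up0_up1, up1_up0, up0_up0, X_up1, X_up0]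
    field_simp
    linear_combination (g (up1 ω i) * (p - 1) - p * g (up0 ω i)) * hW
  have sum_D : ∑ ω, D ω = 0 := by
    have := sum_up1_add_up0 i D
    simp only [pair_cancel, Finset.sum_const_zero] at this
    linarith
  simp only [Ex, D, sub_mul, Finset.sum_sub_distrib] at sum_D ⊢
  linarith

lemma card_pivSet_eq_sum {n : ℕ} (f : (Fin n → Bool) → Bool) (hf : Mono f) (ω : Fin n → Bool) :
    ((pivSet f ω).card : ℝ) = ∑ i, (fval f (up1 ω i) - fval f (up0 ω i)) := by
  rw [pivSet, Finset.card_filter, Nat.cast_sum]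
  refine Finset.sum_congr rfl fun i _ => ?_
  have := hf ω i
  cases h1 : f (up1 ω i) <;> cases h0 : f (up0 ω i) <;> simp_all [fval, Bool.le_iff_imp]

theorem stmt3 (n : ℕ) (p : ℝ) (hp0 : 0 < p) (hp1 : p < 1)
    (f : (Fin n → Bool) → Bool) (hf : Mono f) :
    Ex n p (fun ω => ((pivSet f ω).card : ℝ)) =
      Ex n p (fun ω => Sn n p ω * fval f ω) := by
  calc Ex n p (fun ω => ((pivSet f ω).card : ℝ))
      = ∑ i, Ex n p (fun ω => fval f (up1 ω i) - fval f (up0 ω i)) := by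
        simp only [card_pivSet_eq_sum f hf, Ex_sum]
    _ = ∑ i, Ex n p (fun ω => X n p i ω * fval f ω) := by
        simp only [Ex_X_mul n p hp0.ne' hp1.ne]
    _ = Ex n p (fun ω => Sn n p ω * fval f ω) := by
        simp only [Sn, Finset.sum_mul, Ex_sum]
end

section
/- For any non-decreasing Boolean function f : {0,1}^n → {0,1}, the derivative with respect to p of the expectation E_p(f) under the Bernoulli(p) product measure equals the expected size of the pivotal set: d/dp E_p(f) = E_p(|P(f)|) (Margulis–Russo formula). -/
open Finset Real

/-!
Differentiating the product weight gives, for each coordinate `i`, the sum of `g ω` against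
`±∏_{j ≠ i} w_j(ω)`, the sign being that of `ω i`. Pairing `ω` with the configuration flipped at `i`
turns this into `E_p[g(ω^i) − g(ω_i)]`, and for monotone `f` that difference is the indicator that
`i` is pivotal.
-/

namespace Russo

variable {n : ℕ}

/-- Since `σ` is a bijection, `∑ F = ∑ F ∘ σ`; so the sums agree once the `σ`-symmetrised
summands do, up to the factor `2`. -/
lemma sum_eq_sum_of_add_comp_eq {α M : Type*} [Fintype α] [AddCommMonoid M] [IsAddTorsionFree M]
    (σ : Equiv.Perm α) {F G : α → M} (h : ∀ x, F x + F (σ x) = G x + G (σ x)) :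
    ∑ x, F x = ∑ x, G x := by
  have hsymm (H : α → M) : 2 • ∑ x, H x = ∑ x, (H x + H (σ x)) := by
    rw [two_nsmul, sum_add_distrib, Equiv.sum_comp]
  apply nsmul_right_injective two_ne_zero
  simp only [hsymm, h]

def coordWeight (p : ℝ) (b : Bool) : ℝ :=
  if b then p else 1 - p

lemma hasDerivAt_coordWeight (p : ℝ) (b : Bool) :
    HasDerivAt (fun q => coordWeight q b) (if b then 1 else -1) p := by
  cases b
  · simpa [coordWeight] using (hasDerivAt_id p).const_sub 1
  · simpa [coordWeight] using hasDerivAt_id' p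

def weightOff (p : ℝ) (i : Fin n) (ω : Fin n → Bool) : ℝ :=
  ∏ j ∈ univ.erase i, coordWeight p (ω j)

lemma W_eq_coordWeight_mul_weightOff (p : ℝ) (i : Fin n) (ω : Fin n → Bool) :
    W n p ω = coordWeight p (ω i) * weightOff p i ω :=
  (mul_prod_erase univ (fun j => coordWeight p (ω j)) (mem_univ i)).symm

lemma hasDerivAt_W (p : ℝ) (ω : Fin n → Bool) :
    HasDerivAt (fun q => W n q ω)
      (∑ i, weightOff p i ω * if ω i then 1 else -1) p :=
  HasDerivAt.fun_finsetProd fun i _ => hasDerivAt_coordWeight p (ω i)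

lemma Ex_sum {ι : Type*} (s : Finset ι) (p : ℝ) (g : ι → (Fin n → Bool) → ℝ) :
    Ex n p (fun ω => ∑ i ∈ s, g i ω) = ∑ i ∈ s, Ex n p (g i) := by
  simp only [Ex, sum_mul]
  exact sum_comm

def flipAt (i : Fin n) : Equiv.Perm (Fin n → Bool) :=
  Function.Involutive.toPerm (fun ω => Function.update ω i !ω i) fun ω => by simp

lemma flipAt_apply (i : Fin n) (ω : Fin n → Bool) : flipAt i ω = Function.update ω i !ω i :=
  rfl

lemma flipAt_apply_self (i : Fin n) (ω : Fin n → Bool) : flipAt i ω i = !ω i := by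
  simp [flipAt_apply]

lemma up1_flipAt (i : Fin n) (ω : Fin n → Bool) : up1 (flipAt i ω) i = up1 ω i := by
  simp [flipAt_apply, up1]

lemma up0_flipAt (i : Fin n) (ω : Fin n → Bool) : up0 (flipAt i ω) i = up0 ω i := by
  simp [flipAt_apply, up0]

lemma weightOff_flipAt (p : ℝ) (i : Fin n) (ω : Fin n → Bool) :
    weightOff p i (flipAt i ω) = weightOff p i ω :=
  prod_congr rfl fun j hj => by simp [flipAt_apply, Function.update_of_ne (ne_of_mem_erase hj)]

lemma apply_eq_ite_up1_up0 {β : Type*} (g : (Fin n → Bool) → β) (ω : Fin n → Bool) (i : Fin n) :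
    g ω = if ω i then g (up1 ω i) else g (up0 ω i) := by
  cases h : ω i <;> simp [up1, up0, ← h]

lemma sum_mul_weightOff_mul_sign (p : ℝ) (i : Fin n) (g : (Fin n → Bool) → ℝ) :
    ∑ ω, g ω * (weightOff p i ω * if ω i then 1 else -1)
      = Ex n p (fun ω => g (up1 ω i) - g (up0 ω i)) := by
  refine sum_eq_sum_of_add_comp_eq (flipAt i) fun ω => ?_
  rw [W_eq_coordWeight_mul_weightOff p i, W_eq_coordWeight_mul_weightOff p i,
    apply_eq_ite_up1_up0 g ω i, apply_eq_ite_up1_up0 g (flipAt i ω) i]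
  simp only [up1_flipAt, up0_flipAt, weightOff_flipAt, flipAt_apply_self]
  cases ω i <;> simp only [coordWeight, Bool.not_true, Bool.not_false, Bool.false_eq_true, if_true,
    if_false] <;> ring

theorem hasDerivAt_Ex (p : ℝ) (g : (Fin n → Bool) → ℝ) :
    HasDerivAt (fun q => Ex n q g) (∑ i, Ex n p (fun ω => g (up1 ω i) - g (up0 ω i))) p := by
  refine (HasDerivAt.fun_sum fun ω _ => (hasDerivAt_W p ω).const_mul (g ω)).congr_deriv ?_
  simp only [← sum_mul_weightOff_mul_sign, mul_sum]
  exact sum_comm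

lemma sum_fval_up1_sub_up0 {f : (Fin n → Bool) → Bool} (hf : Mono f) (ω : Fin n → Bool) :
    ∑ i, (fval f (up1 ω i) - fval f (up0 ω i)) = #(pivSet f ω) := by
  rw [pivSet, card_filter, Nat.cast_sum]
  refine sum_congr rfl fun i _ => ?_
  have hmono := hf ω i
  revert hmono
  simp only [fval]
  cases f (up1 ω i) <;> cases f (up0 ω i) <;> simp

end Russo

theorem stmt7_general (n : ℕ) (p : ℝ)
    (f : (Fin n → Bool) → Bool) (hf : Mono f) :
    HasDerivAt (fun q => Ex n q (fval f))
      (Ex n p (fun ω => ((pivSet f ω).card : ℝ))) p := by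
  have h := Russo.hasDerivAt_Ex p (fval f)
  rwa [← Russo.Ex_sum, funext (Russo.sum_fval_up1_sub_up0 hf)] at h

theorem stmt7 (n : ℕ) (p : ℝ) (hp0 : 0 < p) (hp1 : p < 1)
    (f : (Fin n → Bool) → Bool) (hf : Mono f) :
    HasDerivAt (fun q => Ex n q (fval f))
      (Ex n p (fun ω => ((pivSet f ω).card : ℝ))) p :=
  stmt7_general n p f hf
end

section
/- For X a random variable with P(X = 1/p) = p, P(X = −1/(1−p)) = 1−p, the moment generating function φ(λ) = E(exp(λX)) satisfies φ(λ) ≤ exp(λ²/(2p²(1−p)²)) for all λ > 0. -/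
open Finset Real

/-! Since `X` has mean zero, `exp y ≥ 1 + y` gives `φ(λ) ≥ 1` for every `λ`, hence
`φ(λ) ≤ φ(λ) φ(-λ)`. That product is the convex combination of `1` and `cosh (λ / (p (1 - p)))`
with weights `p² + (1 - p)²` and `2 p (1 - p)`, so it is at most the cosh, and
`cosh x ≤ exp (x² / 2)`. -/

/-- `φ(λ) = 𝔼 exp (λ X)` for `X = 1/p` with probability `p` and `X = -1/(1-p)` otherwise. -/
noncomputable def bernoulliMgf (p l : ℝ) : ℝ :=
  p * exp (l / p) + (1 - p) * exp (-l / (1 - p))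

section

variable {p : ℝ}

theorem one_le_bernoulliMgf (hp0 : 0 < p) (hp1 : p < 1) (l : ℝ) : 1 ≤ bernoulliMgf p l :=
  calc (1 : ℝ) = p * (l / p + 1) + (1 - p) * (-l / (1 - p) + 1) := by
        field_simp [hp0.ne', (sub_pos.2 hp1).ne']; ring
    _ ≤ bernoulliMgf p l := by
        unfold bernoulliMgf
        have hq : 0 ≤ 1 - p := by linarith
        gcongr <;> exact add_one_le_exp _

theorem bernoulliMgf_mul_bernoulliMgf_neg (hp0 : p ≠ 0) (hp1 : 1 - p ≠ 0) (l : ℝ) :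
    bernoulliMgf p l * bernoulliMgf p (-l) =
      p ^ 2 + (1 - p) ^ 2 + 2 * p * (1 - p) * cosh (l / (p * (1 - p))) := by
  have hsum : l / p + l / (1 - p) = l / (p * (1 - p)) := by field_simp; ring
  simp only [bernoulliMgf, cosh_eq, neg_neg, neg_div, ← hsum, neg_add, exp_add, exp_neg]
  field_simp
  ring

theorem sq_add_sq_add_mul_le_of_one_le {c : ℝ} (hc : 1 ≤ c) :
    p ^ 2 + (1 - p) ^ 2 + 2 * p * (1 - p) * c ≤ c := by
  nlinarith [sq_nonneg (2 * p - 1)]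

theorem bernoulliMgf_le_exp (hp0 : 0 < p) (hp1 : p < 1) (l : ℝ) :
    bernoulliMgf p l ≤ exp (l ^ 2 / (2 * p ^ 2 * (1 - p) ^ 2)) := by
  have hq : 1 - p ≠ 0 := (sub_pos.2 hp1).ne'
  set x := l / (p * (1 - p))
  calc bernoulliMgf p l ≤ bernoulliMgf p l * bernoulliMgf p (-l) :=
        le_mul_of_one_le_right (zero_le_one.trans (one_le_bernoulliMgf hp0 hp1 l))
          (one_le_bernoulliMgf hp0 hp1 (-l))
    _ = p ^ 2 + (1 - p) ^ 2 + 2 * p * (1 - p) * cosh x :=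
        bernoulliMgf_mul_bernoulliMgf_neg hp0.ne' hq l
    _ ≤ cosh x := sq_add_sq_add_mul_le_of_one_le (one_le_cosh x)
    _ ≤ exp (x ^ 2 / 2) := cosh_le_exp_half_sq x
    _ = exp (l ^ 2 / (2 * p ^ 2 * (1 - p) ^ 2)) := by simp only [x]; congr 1; field_simp

end

theorem stmt14 (p : ℝ) (hp0 : 0 < p) (hp1 : p < 1) :
    ∀ l : ℝ, 0 < l →
      p * Real.exp (l / p) + (1 - p) * Real.exp (-l / (1 - p)) ≤
        Real.exp (l ^ 2 / (2 * p ^ 2 * (1 - p) ^ 2)) :=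
  fun l _ => bernoulliMgf_le_exp hp0 hp1 l
end

section
/- For any Boolean function f : {0,1}^n → {0,1}, P(f = 1) ≤ 2·exp(−(1/(2n))·(p(1−p)·E(S_n | f=1))²), under the Bernoulli(p) product measure. -/
open Finset Real

/-
With `Y = p (1 - p) Sₙ = ∑ (ω(i) - p)` and `μ = E(Y | f = 1)`: each centred coordinate has
moment generating function at most `cosh s ≤ exp (s² / 2)`, so `E e^{sY} ≤ exp (n s² / 2)`.
Jensen's inequality for the conditional law gives
`exp (s μ) ≤ E(e^{sY}; f = 1) / P(f = 1) ≤ exp (n s² / 2) / P(f = 1)`,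
and `s = μ / n` yields `P(f = 1) ≤ exp (-μ² / (2n))`, even without the factor `2`.
-/

theorem bernoulli_mgf_le (s : ℝ) {p : ℝ} (hp₀ : 0 ≤ p) (hp₁ : p ≤ 1) :
    p * exp ((1 - p) * s) + (1 - p) * exp (-p * s) ≤ exp (s ^ 2 / 2) :=
  calc p * exp ((1 - p) * s) + (1 - p) * exp (-p * s)
      ≤ p * (cosh s + (1 - p) * sinh s) + (1 - p) * (cosh s + -p * sinh s) := by
        have hp₁' : 0 ≤ 1 - p := sub_nonneg.2 hp₁
        have hx : |1 - p| ≤ 1 := abs_le.2 ⟨by linarith, by linarith⟩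
        have hy : |-p| ≤ 1 := abs_le.2 ⟨by linarith, by linarith⟩
        gcongr
        · exact exp_mul_le_cosh_add_mul_sinh hx s
        · exact exp_mul_le_cosh_add_mul_sinh hy s
    _ = cosh s := by ring
    _ ≤ exp (s ^ 2 / 2) := cosh_le_exp_half_sq s

section Bernoulli

variable {n : ℕ} {p : ℝ}

theorem W_nonneg (hp₀ : 0 ≤ p) (hp₁ : p ≤ 1) (ω : Fin n → Bool) : 0 ≤ W n p ω :=
  prod_nonneg fun _ _ => by split <;> linarith

theorem Ex_const_mul (c : ℝ) (g : (Fin n → Bool) → ℝ) :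
    Ex n p (fun ω => c * g ω) = c * Ex n p g := by
  simp only [Ex, mul_sum, mul_assoc]

theorem Ex_mono (hp₀ : 0 ≤ p) (hp₁ : p ≤ 1) {g h : (Fin n → Bool) → ℝ} (hgh : ∀ ω, g ω ≤ h ω) :
    Ex n p g ≤ Ex n p h :=
  sum_le_sum fun ω _ => mul_le_mul_of_nonneg_right (hgh ω) (W_nonneg hp₀ hp₁ ω)

theorem fval_nonneg (f : (Fin n → Bool) → Bool) (ω : Fin n → Bool) : 0 ≤ fval f ω := by
  unfold fval; split <;> norm_num

theorem fval_le_one (f : (Fin n → Bool) → Bool) (ω : Fin n → Bool) : fval f ω ≤ 1 := by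
  unfold fval; split <;> norm_num

theorem Pr_eq_Ex_fval (f : (Fin n → Bool) → Bool) :
    Pr n p (fun ω => f ω = true) = Ex n p (fval f) := by
  simp only [Pr, Ex, fval, sum_filter]
  refine sum_congr rfl fun ω _ => ?_
  split <;> simp_all

theorem Ex_prod_eq_pow (g : Bool → ℝ) :
    Ex n p (fun ω => ∏ i, g (ω i)) = (p * g true + (1 - p) * g false) ^ n := by
  classical
  calc Ex n p (fun ω => ∏ i, g (ω i))
      = ∑ ω : Fin n → Bool, ∏ i, g (ω i) * (if ω i then p else 1 - p) := by
        simp only [Ex, W, prod_mul_distrib]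
    _ = ∏ _i : Fin n, ∑ b : Bool, g b * (if b then p else 1 - p) :=
        (Fintype.prod_sum fun _ b => g b * (if b then p else 1 - p)).symm
    _ = (p * g true + (1 - p) * g false) ^ n := by
        simp only [prod_const, card_univ, Fintype.card_fin, Fintype.sum_bool, if_pos,
          Bool.false_eq_true, if_false]
        ring_nf

theorem mul_X_eq (hp₀ : p ≠ 0) (hp₁ : p ≠ 1) (i : Fin n) (ω : Fin n → Bool) :
    p * (1 - p) * X n p i ω = if ω i then 1 - p else -p := by
  have : 1 - p ≠ 0 := sub_ne_zero.2 hp₁.symm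
  unfold X
  split <;> field_simp <;> ring

theorem Ex_exp_mul_Sn_le (hp₀ : 0 < p) (hp₁ : p < 1) (s : ℝ) :
    Ex n p (fun ω => exp (s * (p * (1 - p) * Sn n p ω))) ≤ exp (n * s ^ 2 / 2) := by
  have hprod : ∀ ω, exp (s * (p * (1 - p) * Sn n p ω)) =
      ∏ i, exp ((if ω i then 1 - p else -p) * s) := fun ω => by
    simp only [Sn, mul_sum, sum_mul, ← exp_sum, mul_X_eq hp₀.ne' hp₁.ne, mul_comm s]
  calc Ex n p (fun ω => exp (s * (p * (1 - p) * Sn n p ω)))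
      = (p * exp ((1 - p) * s) + (1 - p) * exp (-p * s)) ^ n := by
        simp only [hprod]
        exact Ex_prod_eq_pow fun b => exp ((if b then 1 - p else -p) * s)
    _ ≤ exp (s ^ 2 / 2) ^ n := by
        gcongr
        exact bernoulli_mgf_le s hp₀.le hp₁.le
    _ = exp (n * s ^ 2 / 2) := by rw [← exp_nat_mul]; ring_nf

theorem exp_condEx_le (hp₀ : 0 ≤ p) (hp₁ : p ≤ 1) (f : (Fin n → Bool) → Bool)
    (hpos : 0 < Pr n p (fun ω => f ω = true)) (g : (Fin n → Bool) → ℝ) :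
    exp (Ex n p (fun ω => g ω * fval f ω) / Pr n p (fun ω => f ω = true)) ≤
      Ex n p (fun ω => exp (g ω) * fval f ω) / Pr n p (fun ω => f ω = true) := by
  have hw : ∀ ω ∈ univ, 0 ≤ fval f ω * W n p ω := fun ω _ =>
    mul_nonneg (fval_nonneg f ω) (W_nonneg hp₀ hp₁ ω)
  rw [Pr_eq_Ex_fval] at hpos ⊢
  have key := convexOn_exp.map_centerMass_le hw hpos (fun ω _ => Set.mem_univ (g ω))
  simpa only [centerMass, Ex, smul_eq_mul, Function.comp_apply, mul_assoc, mul_comm, mul_left_comm,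
    div_eq_mul_inv] using key

theorem Pr_le_exp_of_condEx_Sn (hp₀ : 0 < p) (hp₁ : p < 1) (f : (Fin n → Bool) → Bool)
    (hpos : 0 < Pr n p (fun ω => f ω = true)) (s : ℝ) :
    Pr n p (fun ω => f ω = true) ≤
      exp (n * s ^ 2 / 2 - s * (p * (1 - p) *
        (Ex n p (fun ω => Sn n p ω * fval f ω) / Pr n p (fun ω => f ω = true)))) := by
  set P := Pr n p (fun ω => f ω = true)
  set Y : (Fin n → Bool) → ℝ := fun ω => s * (p * (1 - p) * Sn n p ω)
  have hmean : Ex n p (fun ω => Y ω * fval f ω) / P =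
      s * (p * (1 - p) * (Ex n p (fun ω => Sn n p ω * fval f ω) / P)) := by
    simp only [Y, mul_assoc, Ex_const_mul, mul_div_assoc]
  have hrestrict : Ex n p (fun ω => exp (Y ω) * fval f ω) ≤ Ex n p (fun ω => exp (Y ω)) :=
    Ex_mono hp₀.le hp₁.le fun ω => mul_le_of_le_one_right (exp_pos _).le (fval_le_one f ω)
  have hjensen := exp_condEx_le hp₀.le hp₁.le f hpos Y
  rw [hmean, le_div_iff₀ hpos] at hjensen
  rw [exp_sub, le_div_iff₀ (exp_pos _), mul_comm]
  exact hjensen.trans (hrestrict.trans (Ex_exp_mul_Sn_le hp₀ hp₁ s))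

end Bernoulli

theorem stmt16_general (n : ℕ) (p : ℝ) (hp0 : 0 < p) (hp1 : p < 1)
    (f : (Fin n → Bool) → Bool)
    (hpos : 0 < Pr n p (fun ω => f ω = true)) :
    Pr n p (fun ω => f ω = true) ≤
      2 * Real.exp (-(1 / (2 * n)) *
        (p * (1 - p) *
          (Ex n p (fun ω => Sn n p ω * fval f ω) /
            Pr n p (fun ω => f ω = true))) ^ 2) := by
  set μ := p * (1 - p) * (Ex n p (fun ω => Sn n p ω * fval f ω) / Pr n p (fun ω => f ω = true))
  have hopt : n * (μ / n) ^ 2 / 2 - μ / n * μ = -(1 / (2 * n)) * μ ^ 2 := by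
    rcases eq_or_ne (n : ℝ) 0 with hn | hn
    · simp [hn]
    · field_simp; ring
  have hchernoff := Pr_le_exp_of_condEx_Sn hp0 hp1 f hpos (μ / n)
  rw [hopt] at hchernoff
  linarith [exp_pos (-(1 / (2 * n)) * μ ^ 2)]

theorem stmt16 (n : ℕ) (hn : 1 ≤ n) (p : ℝ) (hp0 : 0 < p) (hp1 : p < 1)
    (f : (Fin n → Bool) → Bool)
    (hpos : 0 < Pr n p (fun ω => f ω = true)) :
    Pr n p (fun ω => f ω = true) ≤
      2 * Real.exp (-(1 / (2 * n)) *
        (p * (1 - p) *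
          (Ex n p (fun ω => Sn n p ω * fval f ω) /
            Pr n p (fun ω => f ω = true))) ^ 2) :=
  stmt16_general n p hp0 hp1 f hpos
end
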